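/- If c ∈ F is not of the form k·1_F for any integer k, then the only F-linear subspaces of A invariant under all operators Q_{i,j} (i ≠ j, i,j ∈ {1,…,n+1}) and Q_{i,i} − Q_{j,j} (i,j ∈ {1,…,n+1}) are {0} and A. -/

import Mathlib

open MvPolynomial

/-- Multiplication by `x i` as an `F`-linear endomorphism of `A = F[x_1,…,x_n]`. -/
noncomputable def mulX (F : Type*) [Field F] (n : ℕ) (i : Fin n) :
    Module.End F (MvPolynomial (Fin n) F) :=
  LinearMap.mulLeft F (X i)

/-- The partial derivative `∂_i` as an `F`-linear endomorphism of `A`. -/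
noncomputable def pd (F : Type*) [Field F] (n : ℕ) (i : Fin n) :
    Module.End F (MvPolynomial (Fin n) F) :=
  (pderiv i).toLinearMap

/-- The twisted Euler operator `D̃ = Σ_{r>n1} x_r ∂_r − Σ_{i≤n1} x_i ∂_i`
(indices `0,…,n1-1` correspond to the paper's swapped indices `1,…,n1`). -/
noncomputable def Dt (F : Type*) [Field F] (n n1 : ℕ) :
    Module.End F (MvPolynomial (Fin n) F) :=
  ∑ r : Fin n, if (r : ℕ) < n1 then -(mulX F n r * pd F n r) else mulX F n r * pd F n r

/-- The twisted projective oscillator operators `Q_{i,j}` attached to the swapped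
index set `S = {1,…,n1}`; index `n` plays the role of the paper's index `n+1`. -/
noncomputable def Q (F : Type*) [Field F] (n n1 : ℕ) (c : F) (i j : Fin (n + 1)) :
    Module.End F (MvPolynomial (Fin n) F) :=
  if hi : (i : ℕ) < n then
    if hj : (j : ℕ) < n then
      if (i : ℕ) < n1 then
        if (j : ℕ) < n1 then
          -(mulX F n ⟨j, hj⟩ * pd F n ⟨i, hi⟩) - (if i = j then 1 else 0)
        else pd F n ⟨i, hi⟩ * pd F n ⟨j, hj⟩
      else
        if (j : ℕ) < n1 then -(mulX F n ⟨i, hi⟩ * mulX F n ⟨j, hj⟩)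
        else mulX F n ⟨i, hi⟩ * pd F n ⟨j, hj⟩
    else
      if (i : ℕ) < n1 then (Dt F n n1 + (c - n1 - 1) • 1) * pd F n ⟨i, hi⟩
      else mulX F n ⟨i, hi⟩ * (Dt F n n1 + (c - n1) • 1)
  else
    if hj : (j : ℕ) < n then
      if (j : ℕ) < n1 then mulX F n ⟨j, hj⟩
      else -pd F n ⟨j, hj⟩
    else -(Dt F n n1 + (c - n1) • 1)

lemma my_coeff_pderiv {F : Type*} [Field F] {n : ℕ} (i : Fin n) (m : Fin n →₀ ℕ)
    (p : MvPolynomial (Fin n) F) :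
    coeff m (pderiv i p) = ((m i : F) + 1) * coeff (m + Finsupp.single i 1) p := by
  induction p using MvPolynomial.induction_on' with
  | add p q hp hq => simp [hp, hq, mul_add]
  | monomial s a =>
    rw [pderiv_monomial, coeff_monomial, coeff_monomial]
    by_cases h : s = m + Finsupp.single i 1
    · have hsi : s i = m i + 1 := by simp [h]
      have : s - Finsupp.single i 1 = m := by
        rw [h]; ext j; by_cases hj : j = i <;> simp [hj, Finsupp.single_apply]
      rw [if_pos this, if_pos h, hsi]
      push_cast; ring
    · rw [if_neg h]
      by_cases h0 : s i = 0
      · by_cases h1 : s - Finsupp.single i 1 = m <;> simp [h1, h0]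
      · have : s - Finsupp.single i 1 ≠ m := by
          intro hm
          apply h
          ext j
          have hj := congrArg (fun f => f j) hm
          simp only [Finsupp.tsub_apply, Finsupp.add_apply, Finsupp.single_apply] at hj ⊢
          by_cases hji : i = j
          · subst hji; simp at hj ⊢; omega
          · simp [hji] at hj ⊢; omega
        simp [this]

def dZ {n : ℕ} (n1 : ℕ) (a : Fin n →₀ ℕ) : ℤ :=
  ∑ r : Fin n, if (r : ℕ) < n1 then -(a r : ℤ) else (a r : ℤ)

lemma mulXpd {F : Type*} [Field F] {n : ℕ} (r : Fin n) (a : Fin n →₀ ℕ) (b : F) :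
    (mulX F n r * pd F n r) (monomial a b) = (a r : F) • monomial a b := by
  rw [Module.End.mul_apply]
  simp only [pd, Derivation.coeFn_coe, pderiv_monomial, mulX, LinearMap.mulLeft_apply]
  by_cases h : a r = 0
  · simp [h]
  · have hadd : Finsupp.single r 1 + (a - Finsupp.single r 1) = a := by
      ext j
      simp only [Finsupp.add_apply, Finsupp.tsub_apply, Finsupp.single_apply]
      by_cases hj : r = j
      · subst hj; simp; omega
      · simp [hj]
    rw [X, monomial_mul, hadd, smul_monomial, smul_eq_mul]
    congr 1
    ring

lemma Dt_monomial {F : Type*} [Field F] {n : ℕ} (n1 : ℕ) (a : Fin n →₀ ℕ) (b : F) :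
    Dt F n n1 (monomial a b) = ((dZ n1 a : ℤ) : F) • monomial a b := by
  rw [Dt, LinearMap.sum_apply]
  have : ∀ r : Fin n,
      (if (r : ℕ) < n1 then -(mulX F n r * pd F n r) else mulX F n r * pd F n r) (monomial a b)
      = (if (r : ℕ) < n1 then -(a r : F) else (a r : F)) • monomial a b := by
    intro r
    by_cases h : (r : ℕ) < n1
    · rw [if_pos h, if_pos h, LinearMap.neg_apply, mulXpd, neg_smul]
    · rw [if_neg h, if_neg h, mulXpd]
  rw [Finset.sum_congr rfl fun r _ => this r, ← Finset.sum_smul]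
  congr 1
  rw [dZ]
  push_cast
  rfl

lemma coeff_DtAdd {F : Type*} [Field F] {n : ℕ} (n1 : ℕ) (lam : F) (m : Fin n →₀ ℕ)
    (p : MvPolynomial (Fin n) F) :
    coeff m ((Dt F n n1 + lam • 1) p) = (((dZ n1 m : ℤ) : F) + lam) * coeff m p := by
  induction p using MvPolynomial.induction_on' with
  | add p q hp hq => simp only [map_add, coeff_add, hp, hq]; ring
  | monomial s a =>
    rw [LinearMap.add_apply, Dt_monomial, coeff_add, coeff_smul]
    by_cases h : s = m
    · subst h; simp [coeff_monomial]; ring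
    · simp [coeff_monomial, Ne.symm h, h]

lemma DtAdd_eq_zero {F : Type*} [Field F] {n : ℕ} (n1 : ℕ) (lam : F)
    (hlam : ∀ m : Fin n →₀ ℕ, ((dZ n1 m : ℤ) : F) + lam ≠ 0)
    (p : MvPolynomial (Fin n) F) (hp : (Dt F n n1 + lam • 1) p = 0) : p = 0 := by
  ext m
  have := congrArg (coeff m) hp
  rw [coeff_DtAdd] at this
  simpa using (mul_eq_zero.mp this).resolve_left (hlam m)

lemma support_DtAdd {F : Type*} [Field F] {n : ℕ} (n1 : ℕ) (lam : F)
    (p : MvPolynomial (Fin n) F) :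
    ((Dt F n n1 + lam • 1) p).support ⊆ p.support := by
  intro m hm
  rw [mem_support_iff] at hm ⊢
  intro h
  rw [coeff_DtAdd, h, mul_zero] at hm
  exact hm rfl

-- degree facts
lemma my_totalDegree_pderiv_lt {F : Type*} [Field F] [CharZero F] {n : ℕ} (i : Fin n)
    (f : MvPolynomial (Fin n) F) (hf : pderiv i f ≠ 0) :
    (pderiv i f).totalDegree < f.totalDegree := by
  have hsup : (pderiv i f).support.Nonempty := by
    exact MvPolynomial.support_nonempty.mpr hf
  have hbound : ∀ m ∈ (pderiv i f).support, (m.sum fun _ e => e) + 1 ≤ f.totalDegree := by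
    intro m hm
    rw [mem_support_iff, my_coeff_pderiv] at hm
    have h2 : coeff (m + Finsupp.single i 1) f ≠ 0 := by
      intro h; rw [h, mul_zero] at hm; exact hm rfl
    have h3 := le_totalDegree (p := f) (mem_support_iff.mpr h2)
    have h4 : ((m + Finsupp.single i 1).sum fun _ e => e) = (m.sum fun _ e => e) + 1 := by
      rw [Finsupp.sum_add_index' (fun _ => rfl) (fun _ _ _ => rfl),
        Finsupp.sum_single_index rfl]
    omega
  obtain ⟨m0, hm0⟩ := hsup
  have hpos : 0 < f.totalDegree := lt_of_lt_of_le (Nat.succ_pos _) (hbound m0 hm0)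
  rw [totalDegree, Finset.sup_lt_iff (by exact hpos)]
  intro m hm
  exact lt_of_lt_of_le (Nat.lt_succ_self _) (hbound m hm)

lemma exists_pderiv_ne_zero {F : Type*} [Field F] [CharZero F] {n : ℕ}
    (f : MvPolynomial (Fin n) F) (hf : f.totalDegree ≠ 0) :
    ∃ i : Fin n, pderiv i f ≠ 0 := by
  rw [Ne, totalDegree_eq_zero_iff] at hf
  push_neg at hf
  obtain ⟨m, hm, i, hi⟩ := hf
  refine ⟨i, fun h => ?_⟩
  set m' : Fin n →₀ ℕ := m - Finsupp.single i 1 with hm'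
  have hkey := my_coeff_pderiv i m' f
  rw [h] at hkey
  have hadd : m' + Finsupp.single i 1 = m := by
    ext j
    simp only [hm', Finsupp.add_apply, Finsupp.tsub_apply, Finsupp.single_apply]
    by_cases hj : i = j
    · subst hj; simp; omega
    · simp [hj]
  rw [hadd, coeff_zero] at hkey
  have hmf : coeff m f ≠ 0 := mem_support_iff.mp hm
  rcases mul_eq_zero.mp hkey.symm with h1 | h1
  · have h2 : ((m' i + 1 : ℕ) : F) = 0 := by push_cast; exact h1
    have h3 : m' i + 1 = 0 := by exact_mod_cast h2
    omega
  · exact hmf h1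

lemma eq_C_of_totalDegree_eq_zero {F : Type*} [Field F] {n : ℕ}
    (f : MvPolynomial (Fin n) F) (hf : f.totalDegree = 0) : f = C (coeff 0 f) := by
  rw [totalDegree_eq_zero_iff] at hf
  ext m
  by_cases hm : m = 0
  · subst hm; simp
  · rw [coeff_C, if_neg (Ne.symm hm)]
    by_contra h
    apply hm
    ext j
    exact hf m (mem_support_iff.mpr h) j
section Qlem
variable {F : Type*} [Field F] {n n1 : ℕ} {c : F}

lemma Q_last_lt (i : Fin n) (hi : (i : ℕ) < n1) :
    Q F n n1 c (Fin.last n) i.castSucc = mulX F n i := by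
  rw [Q, dif_neg (by simp), dif_pos (by simp), if_pos (by simpa using hi)]
  rfl

lemma Q_last_ge (i : Fin n) (hi : ¬ (i : ℕ) < n1) :
    Q F n n1 c (Fin.last n) i.castSucc = -pd F n i := by
  rw [Q, dif_neg (by simp), dif_pos (by simp), if_neg (by simpa using hi)]
  rfl

lemma Q_lt_last (i : Fin n) (hi : (i : ℕ) < n1) :
    Q F n n1 c i.castSucc (Fin.last n) = (Dt F n n1 + (c - n1 - 1) • 1) * pd F n i := by
  rw [Q, dif_pos (by simp), dif_neg (by simp), if_pos (by simpa using hi)]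
  rfl

lemma Q_ge_last (i : Fin n) (hi : ¬ (i : ℕ) < n1) :
    Q F n n1 c i.castSucc (Fin.last n) = mulX F n i * (Dt F n n1 + (c - n1) • 1) := by
  rw [Q, dif_pos (by simp), dif_neg (by simp), if_neg (by simpa using hi)]
  rfl

end Qlem
/-- if `c` is not an integer (times `1_F`), the only subspaces of `A` invariant
under all `Q_{i,j}` (`i ≠ j`) and `Q_{i,i} − Q_{j,j}` are `{0}` and `A`. -/
theorem stmt_3 (F : Type*) [Field F] [CharZero F] (n n1 : ℕ) (hn : 2 ≤ n)
    (hn1 : 1 ≤ n1) (hn1n : n1 < n) (c : F) (hc : ∀ k : ℤ, c ≠ (k : F)) :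
    ∀ W : Submodule F (MvPolynomial (Fin n) F),
      (∀ i j : Fin (n + 1), i ≠ j → ∀ f ∈ W, Q F n n1 c i j f ∈ W) →
      (∀ i j : Fin (n + 1), ∀ f ∈ W, (Q F n n1 c i i - Q F n n1 c j j) f ∈ W) →
      W = ⊥ ∨ W = ⊤ := by
  intro W hQW _hD
  by_cases hW : W = ⊥
  · exact Or.inl hW
  right
  -- eigenvalue non-vanishing
  have hne1 : ∀ m : Fin n →₀ ℕ, ((dZ n1 m : ℤ) : F) + (c - ↑n1 - 1) ≠ 0 := by
    intro m h
    apply hc ((n1 : ℤ) + 1 - dZ n1 m)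
    have : c = (n1 : F) + 1 - ((dZ n1 m : ℤ) : F) := by linear_combination h
    rw [this]; push_cast; ring
  have hne2 : ∀ m : Fin n →₀ ℕ, ((dZ n1 m : ℤ) : F) + (c - ↑n1) ≠ 0 := by
    intro m h
    apply hc ((n1 : ℤ) - dZ n1 m)
    have : c = (n1 : F) - ((dZ n1 m : ℤ) : F) := by linear_combination h
    rw [this]; push_cast; ring
  -- constants
  have hconst : ∀ f ∈ W, f ≠ 0 → f.totalDegree = 0 → (1 : MvPolynomial (Fin n) F) ∈ W := by
    intro f hfW hf0 hdeg
    obtain ⟨b, hb, hfC⟩ : ∃ b : F, b ≠ 0 ∧ f = C b := by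
      refine ⟨coeff 0 f, ?_, eq_C_of_totalDegree_eq_zero f hdeg⟩
      intro h
      exact hf0 (by rw [eq_C_of_totalDegree_eq_zero f hdeg, h, map_zero])
    subst hfC
    have h1 := W.smul_mem b⁻¹ hfW
    rwa [smul_eq_C_mul, ← C_mul, inv_mul_cancel₀ hb, C_1] at h1
  -- 1 ∈ W by degree descent
  have key : ∀ N : ℕ, ∀ f, f ∈ W → f ≠ 0 → f.totalDegree ≤ N →
      (1 : MvPolynomial (Fin n) F) ∈ W := by
    intro N
    induction N with
    | zero => intro f hfW hf0 hdeg; exact hconst f hfW hf0 (Nat.le_zero.mp hdeg)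
    | succ N ih =>
      intro f hfW hf0 hdeg
      by_cases hdeg0 : f.totalDegree = 0
      · exact hconst f hfW hf0 hdeg0
      obtain ⟨i, hi⟩ := exists_pderiv_ne_zero f hdeg0
      by_cases hin1 : (i : ℕ) < n1
      · have hmem := hQW i.castSucc (Fin.last n) (Fin.castSucc_lt_last i).ne f hfW
        rw [Q_lt_last i hin1, Module.End.mul_apply] at hmem
        have hg0 : (Dt F n n1 + (c - ↑n1 - 1) • 1) (pd F n i f) ≠ 0 :=
          fun h => hi (DtAdd_eq_zero n1 _ hne1 _ h)
        have hgdeg : ((Dt F n n1 + (c - ↑n1 - 1) • 1) (pd F n i f)).totalDegree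
            < f.totalDegree :=
          lt_of_le_of_lt (totalDegree_le_of_support_subset (support_DtAdd n1 _ _))
            (my_totalDegree_pderiv_lt i f hi)
        exact ih _ hmem hg0 (by omega)
      · have hmem := hQW (Fin.last n) i.castSucc (Fin.castSucc_lt_last i).ne' f hfW
        rw [Q_last_ge i hin1, LinearMap.neg_apply] at hmem
        have hmem2 : pd F n i f ∈ W := by
          have := W.neg_mem hmem; rwa [neg_neg] at this
        have hgdeg : (pd F n i f).totalDegree < f.totalDegree :=
          my_totalDegree_pderiv_lt i f hi
        exact ih _ hmem2 hi (by omega)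
  obtain ⟨f, hfW, hf0⟩ := Submodule.ne_bot_iff W |>.mp hW
  have hone : (1 : MvPolynomial (Fin n) F) ∈ W := key f.totalDegree f hfW hf0 le_rfl
  -- all monomials
  have hmono : ∀ N : ℕ, ∀ a : Fin n →₀ ℕ, (a.sum fun _ e => e) ≤ N →
      monomial a (1 : F) ∈ W := by
    intro N
    induction N with
    | zero =>
      intro a ha
      have h0 : a = 0 := by
        ext j
        rw [Finsupp.zero_apply]
        by_contra hj
        have hjs : j ∈ a.support := Finsupp.mem_support_iff.mpr hj
        have h2 : a j ≤ a.sum fun _ e => e :=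
          Finset.single_le_sum (f := fun j => a j) (fun _ _ => Nat.zero_le _) hjs
        omega
      rw [h0]
      simpa using hone
    | succ N ih =>
      intro a ha
      by_cases h0 : a = 0
      · rw [h0]; simpa using hone
      obtain ⟨i, hi⟩ : ∃ i, a i ≠ 0 := by
        by_contra h; push_neg at h; exact h0 (Finsupp.ext h)
      set a' : Fin n →₀ ℕ := a - Finsupp.single i 1 with ha'def
      have hadd : Finsupp.single i 1 + a' = a := by
        ext j
        simp only [ha'def, Finsupp.add_apply, Finsupp.tsub_apply, Finsupp.single_apply]
        by_cases hj : i = j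
        · subst hj; simp; omega
        · simp [hj]
      have hsum : (a'.sum fun _ e => e) + 1 = a.sum fun _ e => e := by
        rw [← hadd, Finsupp.sum_add_index' (fun _ => rfl) (fun _ _ _ => rfl),
          Finsupp.sum_single_index rfl]
        ring
      have ha'W : monomial a' (1 : F) ∈ W := ih a' (by omega)
      by_cases hin1 : (i : ℕ) < n1
      · have hmem := hQW (Fin.last n) i.castSucc (Fin.castSucc_lt_last i).ne' _ ha'W
        rw [Q_last_lt i hin1] at hmem
        have heq : (mulX F n i) (monomial a' (1 : F)) = monomial a 1 := by
          rw [mulX, LinearMap.mulLeft_apply, X, monomial_mul, one_mul, hadd]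
        rwa [heq] at hmem
      · have hmem := hQW i.castSucc (Fin.last n) (Fin.castSucc_lt_last i).ne _ ha'W
        rw [Q_ge_last i hin1, Module.End.mul_apply] at hmem
        set μ : F := ((dZ n1 a' : ℤ) : F) + (c - ↑n1) with hμdef
        have hμ : μ ≠ 0 := hne2 a'
        have heq : (mulX F n i) ((Dt F n n1 + (c - ↑n1) • 1) (monomial a' (1 : F)))
            = μ • monomial a 1 := by
          have hDt : (Dt F n n1 + (c - ↑n1) • 1) (monomial a' (1 : F))
              = μ • monomial a' 1 := by
            rw [LinearMap.add_apply, Dt_monomial, LinearMap.smul_apply,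
              Module.End.one_apply, ← add_smul]
          rw [hDt, map_smul, mulX, LinearMap.mulLeft_apply, X, monomial_mul, one_mul, hadd]
        rw [heq] at hmem
        have := W.smul_mem μ⁻¹ hmem
        rwa [smul_smul, inv_mul_cancel₀ hμ, one_smul] at this
  rw [eq_top_iff]
  intro p _
  rw [p.as_sum]
  exact Submodule.sum_mem W fun v hv => by
    have := W.smul_mem (coeff v p) (hmono _ v le_rfl)
    rwa [smul_monomial, smul_eq_mul, mul_one] at this
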